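/- arXiv:2205.01794 — 2 statements merged into one kernel-verified Lean document; each statement's English description precedes it below -/
import Mathlib

section
/- Suppose the reals u_1,…,u_K and strictly positive reals λ_1,…,λ_K satisfy the Afriat inequalities for the dataset {(α_t, β_t) : t = 1,…,K}. Then the Afriat constructed utility u(β) = min_{t∈{1,…,K}} [u_t + λ_t ⟨α_t, β − β_t⟩] satisfies u(β_t) = u_t for every t, and u rationalizes the dataset, i.e., for every t and every β ∈ ℝ^m_{≥0} with ⟨α_t, β⟩ ≤ ⟨α_t, β_t⟩ one has u(β) ≤ u(β_t). -/
/-- Euclidean inner product on `Fin m → ℝ`. -/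
noncomputable def ip {m : ℕ} (x y : Fin m → ℝ) : ℝ := ∑ i, x i * y i

lemma ip_sub {m : ℕ} (a x y : Fin m → ℝ) : ip a (x - y) = ip a x - ip a y := by
  simp [ip, mul_sub, Finset.sum_sub_distrib]

/-- If reals `u_1,…,u_K` and strictly positive reals `λ_1,…,λ_K` satisfy the
Afriat inequalities for the dataset `{(α_t, β_t)}`, then the Afriat constructed utility
`U(β) = min_t [u_t + λ_t ⟨α_t, β − β_t⟩]` satisfies `U(β_t) = u_t` for every `t`, and `U`
rationalizes the dataset: for every `t` and every `β ∈ ℝ^m_{≥0}` with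
`⟨α_t, β⟩ ≤ ⟨α_t, β_t⟩` one has `U(β) ≤ U(β_t)`. (Indices run over `t = 0,…,K-1`.) -/
theorem stmt_4 {m K : ℕ} (hK : 0 < K) (α β : ℕ → Fin m → ℝ)
    (hα : ∀ t < K, ∀ i, 0 < α t i) (hβ : ∀ t < K, ∀ i, 0 ≤ β t i)
    (uu lam : ℕ → ℝ) (hlam : ∀ t < K, 0 < lam t)
    (hAfriat : ∀ s < K, ∀ t < K, uu s - uu t - lam t * ip (α t) (β s - β t) ≤ 0)
    (U : (Fin m → ℝ) → ℝ)
    (hU : ∀ x, U x = (Finset.range K).inf' (Finset.nonempty_range_iff.mpr hK.ne')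
      (fun t => uu t + lam t * ip (α t) (x - β t))) :
    (∀ t < K, U (β t) = uu t) ∧
    (∀ t < K, ∀ γ : Fin m → ℝ, (∀ i, 0 ≤ γ i) →
      ip (α t) γ ≤ ip (α t) (β t) → U γ ≤ U (β t)) := by
  have key : ∀ t < K, U (β t) = uu t := by
    intro t ht
    rw [hU]
    apply le_antisymm
    · refine le_trans (Finset.inf'_le _ (Finset.mem_range.mpr ht)) ?_
      simp [ip]
    · apply Finset.le_inf'
      intro s hs
      have := hAfriat t ht s (Finset.mem_range.mp hs)
      linarith
  refine ⟨key, fun t ht γ hγ hle => ?_⟩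
  rw [key t ht, hU]
  refine le_trans (Finset.inf'_le _ (Finset.mem_range.mpr ht)) ?_
  have h := (hlam t ht).le
  nlinarith [ip_sub (α t) γ (β t)]
end

section
/- (Non-falsifiability of concavity.) If some strictly increasing utility u : ℝ^m_{≥0} → ℝ rationalizes the dataset {(α_t, β_t) : t = 1,…,K}, then there also exists a strictly increasing, continuous, and concave utility (a pointwise minimum of finitely many affine functions) that rationalizes the same dataset. -/
/-!
A strictly increasing rationalizing utility `u` satisfies the revealed-preference conditions:
`u(β_s) ≤ u(β_t)` when `β_s` is affordable at `(α_t, β_t)`, strictly so when it costs strictly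
less. Afriat's inequalities `U_s ≤ U_t + λ_t ⟨α_t, β_s - β_t⟩` with `λ_t > 0` are then solved by
`U_t = -μ ^ k_t`, `λ_t = L μ ^ k_t`, where `k_t` counts the observations strictly preferred to
`β_t` and `L`, `μ` are large; the minimum of the affine functions `U_t + λ_t ⟨α_t, x - β_t⟩` is
the required utility.
-/

open Finset Filter

lemma ip_eq_dotProduct {m : ℕ} (x y : Fin m → ℝ) : ip x y = x ⬝ᵥ y := rfl

lemma ip_strictMono {m : ℕ} {a : Fin m → ℝ} (ha : ∀ i, 0 < a i) : StrictMono (ip a) := by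
  intro x y hxy
  obtain ⟨hle, i, hi⟩ := Pi.lt_def.1 hxy
  exact sum_lt_sum (fun j _ => mul_le_mul_of_nonneg_left (hle j) (ha j).le)
    ⟨i, mem_univ i, mul_lt_mul_of_pos_left hi (ha i)⟩

lemma continuous_ip {m : ℕ} (a : Fin m → ℝ) : Continuous (ip a) :=
  continuous_finsetSum _ fun i _ => continuous_const.mul (continuous_apply i)

lemma StrictMono.finset_inf' {ι α β : Type*} [Preorder α] [LinearOrder β] {s : Finset ι}
    (hs : s.Nonempty) {f : ι → α → β} (hf : ∀ i ∈ s, StrictMono (f i)) :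
    StrictMono fun x => s.inf' hs (f · x) := by
  intro x y hxy
  obtain ⟨i, hi, hy⟩ := exists_mem_eq_inf' hs (f · y)
  show s.inf' hs (f · x) < s.inf' hs (f · y)
  rw [hy]
  exact (inf'_le _ hi).trans_lt (hf i hi hxy)

lemma ConcaveOn.finset_inf' {𝕜 E β ι : Type*} [Semiring 𝕜] [PartialOrder 𝕜] [AddCommMonoid E]
    [AddCommMonoid β] [LinearOrder β] [IsOrderedAddMonoid β] [SMul 𝕜 E] [Module 𝕜 β]
    [PosSMulMono 𝕜 β] {S : Set E} {s : Finset ι} (hs : s.Nonempty) {f : ι → E → β}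
    (hf : ∀ i ∈ s, ConcaveOn 𝕜 S (f i)) : ConcaveOn 𝕜 S fun x => s.inf' hs (f · x) := by
  obtain ⟨i₀, hi₀⟩ := hs
  refine ⟨(hf i₀ hi₀).1, fun x hx y hy a b ha hb hab => le_inf' _ _ fun i hi => ?_⟩
  calc a • s.inf' _ (f · x) + b • s.inf' _ (f · y) ≤ a • f i x + b • f i y := by
        gcongr <;> exact inf'_le _ hi
    _ ≤ f i (a • x + b • y) := (hf i hi).2 hx hy ha hb hab

section MinAffine

variable {ι : Type*} [Fintype ι] {m : ℕ} (hι : (univ : Finset ι).Nonempty)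
  (c : ι → ℝ) (a : ι → Fin m → ℝ)

lemma strictMono_minAffine (ha : ∀ t i, 0 < a t i) :
    StrictMono fun x => univ.inf' hι fun t => c t + ip (a t) x :=
  StrictMono.finset_inf' hι fun t _ => (ip_strictMono (ha t)).const_add (c t)

lemma continuous_minAffine : Continuous fun x => univ.inf' hι fun t => c t + ip (a t) x :=
  Continuous.finset_inf'_apply hι fun t _ => continuous_const.add (continuous_ip (a t))

lemma concaveOn_minAffine :
    ConcaveOn ℝ Set.univ fun x => univ.inf' hι fun t => c t + ip (a t) x :=
  ConcaveOn.finset_inf' hι fun t _ =>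
    (concaveOn_const (c t) convex_univ).add ((dotProductBilin ℝ ℝ (a t)).concaveOn convex_univ)

end MinAffine

lemma lt_of_ip_lt_of_rationalizes {m : ℕ} {p b s : Fin m → ℝ} {u : (Fin m → ℝ) → ℝ}
    (hp : ∀ i, 0 < p i) (hu : StrictMonoOn u (Set.Ici 0))
    (hb : ∀ γ : Fin m → ℝ, 0 ≤ γ → ip p γ ≤ ip p b → u γ ≤ u b) (hs : 0 ≤ s)
    (hsb : ip p s < ip p b) : u s < u b := by
  classical
  obtain ⟨i, -, hi⟩ := exists_lt_of_sum_lt hsb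
  set ε := (ip p b - ip p s) / p i
  have hε : 0 < ε := div_pos (sub_pos.2 hsb) (hp i)
  have hsγ : s < s + Pi.single i ε := lt_add_of_pos_right s (Pi.single_pos.2 hε)
  have hγ : ip p (s + Pi.single i ε) = ip p b := by
    rw [ip_eq_dotProduct, dotProduct_add, dotProduct_single, ← ip_eq_dotProduct,
      mul_div_cancel₀ _ (hp i).ne']
    ring
  exact (hu hs (hs.trans hsγ.le) hsγ).trans_le (hb _ (hs.trans hsγ.le) hγ.le)

lemma card_filter_lt_lt_of_lt {ι α : Type*} [Fintype ι] [LinearOrder α] {w : ι → α} {t s : ι}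
    (h : w t < w s) : #{r | w s < w r} < #{r | w t < w r} :=
  card_lt_card <| (ssubset_iff_of_subset fun r hr => by
    simp only [mem_filter, mem_univ, true_and] at hr ⊢; exact h.trans hr).2
    ⟨s, by simp [h], by simp⟩

theorem exists_afriat_numbers {ι : Type*} [Fintype ι] (w : ι → ℝ) (x : ι → ι → ℝ)
    (hle : ∀ t s, x t s ≤ 0 → w s ≤ w t) (hlt : ∀ t s, x t s < 0 → w s < w t) :
    ∃ U lam : ι → ℝ, (∀ t, 0 < lam t) ∧ ∀ t s, U s ≤ U t + lam t * x t s := by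
  obtain ⟨L, hL0, hL⟩ : ∃ L : ℝ, 0 < L ∧ ∀ t s, w t < w s → 1 ≤ L * x t s := by
    refine ((eventually_gt_atTop 0).and (eventually_all.2 fun t => eventually_all.2 fun s =>
      eventually_imp_distrib_left.2 fun h => ?_)).exists
    have hx : 0 < x t s := lt_of_not_ge fun h' => (hle t s h').not_gt h
    filter_upwards [eventually_ge_atTop (1 / x t s)] with L hL
    rwa [div_le_iff₀ hx] at hL
  obtain ⟨μ, hμ1, hμ⟩ : ∃ μ : ℝ, 1 ≤ μ ∧ ∀ t s, 1 - L * x t s ≤ μ :=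
    ((eventually_ge_atTop 1).and (eventually_all.2 fun t => eventually_all.2 fun s =>
      eventually_ge_atTop _)).exists
  set k : ι → ℕ := fun t => #{r | w t < w r}
  have hμ0 : 0 < μ := one_pos.trans_le hμ1
  refine ⟨fun t => -μ ^ k t, fun t => L * μ ^ k t, fun t => by positivity, fun t s => ?_⟩
  dsimp only
  have hpow : 0 < μ ^ k t := by positivity
  rcases lt_trichotomy (w t) (w s) with h | h | h
  · have := mul_le_mul_of_nonneg_left (hL t s h) hpow.le
    linarith [pow_pos hμ0 (k s)]
  · have hk : k t = k s := by simp only [k, h]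
    have hx : 0 ≤ x t s := le_of_not_gt fun h' => (hlt t s h').ne' h
    rw [hk] at hpow ⊢
    linarith [mul_nonneg (mul_pos hL0 hpow).le hx]
  · have hk : μ ^ (k t + 1) ≤ μ ^ k s := pow_le_pow_right₀ hμ1 (card_filter_lt_lt_of_lt h)
    have := mul_le_mul_of_nonneg_left (hμ t s) hpow.le
    rw [pow_succ] at hk
    linarith

lemma minAffine_le_of_afriat {ι : Type*} [Fintype ι] (hι : (univ : Finset ι).Nonempty) {m : ℕ}
    (p b : ι → Fin m → ℝ) {U lam : ι → ℝ} (hlam : ∀ t, 0 ≤ lam t)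
    (hU : ∀ t s, U s ≤ U t + lam t * (ip (p t) (b s) - ip (p t) (b t))) (t : ι)
    {γ : Fin m → ℝ} (hγ : ip (p t) γ ≤ ip (p t) (b t)) :
    (univ.inf' hι fun s => U s - lam s * ip (p s) (b s) + ip (lam s • p s) γ) ≤
      univ.inf' hι fun s => U s - lam s * ip (p s) (b s) + ip (lam s • p s) (b t) := by
  have piece : ∀ s x, U s - lam s * ip (p s) (b s) + ip (lam s • p s) x =
      U s + lam s * (ip (p s) x - ip (p s) (b s)) := fun s x => by
    simp only [ip_eq_dotProduct, smul_dotProduct, smul_eq_mul]; ring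
  calc (univ.inf' hι fun s => U s - lam s * ip (p s) (b s) + ip (lam s • p s) γ)
      ≤ U t + lam t * (ip (p t) γ - ip (p t) (b t)) :=
        (inf'_le _ (mem_univ t)).trans_eq (piece t γ)
    _ ≤ U t := add_le_of_nonpos_right (mul_nonpos_of_nonneg_of_nonpos (hlam t) (sub_nonpos.2 hγ))
    _ ≤ _ := le_inf' _ _ fun s _ => (piece s (b t)).symm ▸ hU s t

/-- Non-falsifiability of concavity: If some strictly increasing utility
`u : ℝ^m_{≥0} → ℝ` rationalizes the dataset `{(α_t, β_t) : t = 1,…,K}` (indexed here by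
`t = 0,…,K-1`), then there also exists a strictly increasing, continuous, and concave
utility — a pointwise minimum of finitely many affine functions — rationalizing the same
dataset. -/
theorem stmt_15 {m K : ℕ} (α β : ℕ → Fin m → ℝ)
    (hα : ∀ t < K, ∀ i, 0 < α t i) (hβ : ∀ t < K, ∀ i, 0 ≤ β t i)
    (u : (Fin m → ℝ) → ℝ)
    (hmono : ∀ x y : Fin m → ℝ, (∀ i, 0 ≤ x i) → (∀ i, x i ≤ y i) → x ≠ y → u x < u y)
    (hrat : ∀ t < K, ∀ γ : Fin m → ℝ, (∀ i, 0 ≤ γ i) →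
      ip (α t) γ ≤ ip (α t) (β t) → u γ ≤ u (β t)) :
    ∃ v : (Fin m → ℝ) → ℝ,
      (∃ (n : ℕ) (hn : 0 < n) (c : Fin n → ℝ) (a : Fin n → Fin m → ℝ),
        ∀ x, v x = Finset.univ.inf' (Finset.univ_nonempty_iff.mpr
          ⟨⟨0, hn⟩⟩) (fun t : Fin n => c t + ip (a t) x)) ∧
      (∀ x y : Fin m → ℝ, (∀ i, 0 ≤ x i) → (∀ i, x i ≤ y i) → x ≠ y → v x < v y) ∧
      ContinuousOn v {x : Fin m → ℝ | ∀ i, 0 ≤ x i} ∧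
      ConcaveOn ℝ {x : Fin m → ℝ | ∀ i, 0 ≤ x i} v ∧
      (∀ t < K, ∀ γ : Fin m → ℝ, (∀ i, 0 ≤ γ i) →
        ip (α t) γ ≤ ip (α t) (β t) → v γ ≤ v (β t)) := by
  obtain ⟨n, hn, c, a, ha, hv⟩ : ∃ (n : ℕ) (hn : 0 < n) (c : Fin n → ℝ) (a : Fin n → Fin m → ℝ),
      (∀ t i, 0 < a t i) ∧ ∀ t < K, ∀ γ : Fin m → ℝ, (∀ i, 0 ≤ γ i) →
        ip (α t) γ ≤ ip (α t) (β t) →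
        (univ.inf' (univ_nonempty_iff.mpr ⟨⟨0, hn⟩⟩) fun s => c s + ip (a s) γ) ≤
          univ.inf' (univ_nonempty_iff.mpr ⟨⟨0, hn⟩⟩) fun s => c s + ip (a s) (β t) := by
    rcases K.eq_zero_or_pos with rfl | hK
    · exact ⟨1, one_pos, 0, fun _ _ => 1, fun _ _ => one_pos, fun t ht => absurd ht t.not_lt_zero⟩
    have hu : StrictMonoOn u (Set.Ici 0) := fun x hx _ _ hxy => hmono x _ hx hxy.le hxy.ne
    obtain ⟨U, lam, hlam, hU⟩ := exists_afriat_numbers (fun t : Fin K => u (β t))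
      (fun t s => ip (α t) (β s) - ip (α t) (β t))
      (fun t s h => hrat t t.2 _ (hβ s s.2) (by linarith))
      (fun t s h => lt_of_ip_lt_of_rationalizes (hα t t.2) hu (hrat t t.2) (hβ s s.2)
        (by linarith))
    exact ⟨K, hK, fun s => U s - lam s * ip (α s) (β s), fun s => lam s • α s,
      fun s i => mul_pos (hlam s) (hα s s.2 i), fun t ht _ _ hγ =>
        minAffine_le_of_afriat _ (fun s : Fin K => α s) (fun s => β s) (fun s => (hlam s).le)
          hU ⟨t, ht⟩ hγ⟩
  have hn' : (univ : Finset (Fin n)).Nonempty := univ_nonempty_iff.mpr ⟨⟨0, hn⟩⟩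
  exact ⟨_, ⟨n, hn, c, a, fun _ => rfl⟩,
    fun x y _ hxy hne => strictMono_minAffine hn' c a ha (lt_of_le_of_ne hxy hne),
    (continuous_minAffine hn' c a).continuousOn,
    (concaveOn_minAffine hn' c a).subset (Set.subset_univ _) (convex_Ici 0), hv⟩
end
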